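/- For all n ≥ 1 and k ≥ 1, the descent generating function of the set {w ∈ 𝔖_{n+k+1} : s(w) ∈ 𝔖_{n+1,k}, w(1) ≤ n+k−1, and w(n+k+1) = n+k}, i.e. ∑ x^{des(w)} over this set, equals N_{n,k}(x) − N_{n−1,k}(x). -/

import Mathlib

/-!
Write `n + k + 1 = M + 2`. For `v ∈ 𝔖_{M+1}` let `bumpMax v ∈ 𝔖_{M+2}` be `v` with its maximum
raised to `M + 2`, followed by `M + 1`. Splitting at the maximum gives `s(bumpMax v) = s(v) (M+2)`,
so `bumpMax` is a bijection from `𝔖_{M+1}` onto the permutations ending in `M + 1` that respects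
the sorting condition; it adds a descent exactly when `v` ends with its maximum, and `w(1) ≤ M`
says that `v` does not start with it. Moving a leading maximum to the end does not change `s` and
removes one descent, so the set in question is in descent-preserving bijection with the `v`
satisfying the sorting condition that do not end with their maximum. Those that do are the
extensions of `𝔖_M`, which contribute `N_{n-1,k}`.
-/

open scoped Classical
open Polynomial

noncomputable section

/-- The number of descents of a permutation in one-line notation. -/
def descents {n : ℕ} (w : Equiv.Perm (Fin n)) : ℕ :=
  (Finset.univ.filter fun i : Fin n =>
    ∃ j : Fin n, (j : ℕ) = (i : ℕ) + 1 ∧ w j < w i).card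

/-- The Eulerian polynomial `E_n(x)`. -/
def Eul (n : ℕ) : Polynomial ℚ :=
  ∑ w : Equiv.Perm (Fin n), (X : Polynomial ℚ) ^ descents w

/-- One-line notation of a permutation of `Fin m`, as a list of values in `{1, …, m}`. -/
def oneLine {m : ℕ} (w : Equiv.Perm (Fin m)) : List ℕ :=
  List.ofFn fun i => (w i : ℕ) + 1

/-- Fueled version of the stack-sorting map: `s(L m R) = s(L) s(R) m` for `m` the maximum. -/
def stackSortFuel : ℕ → List ℕ → List ℕ
  | 0, _ => []
  | _ + 1, [] => []
  | f + 1, a :: l =>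
      let m := (a :: l).foldr max 0
      let i := (a :: l).idxOf m
      stackSortFuel f ((a :: l).take i) ++ stackSortFuel f ((a :: l).drop (i + 1)) ++ [m]

/-- The stack-sorting map `s` on lists of naturals. -/
def stackSort (w : List ℕ) : List ℕ := stackSortFuel w.length w

/-- `s(w) ∈ 𝔖_{m-k,k}`, i.e. the stack-sorting image of `w ∈ 𝔖_m` fixes all
(1-indexed) positions `> k`. -/
def SortsInto (m k : ℕ) (w : Equiv.Perm (Fin m)) : Prop :=
  ∀ i : ℕ, k ≤ i → i < m → (stackSort (oneLine w)).getD i 0 = i + 1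

/-- `N_{n,k}(x)`: descent generating function of `{w ∈ 𝔖_{n+k} : s(w) ∈ 𝔖_{n,k}}`. -/
def Nnk (n k : ℕ) : Polynomial ℚ :=
  ∑ w ∈ Finset.univ.filter (fun w : Equiv.Perm (Fin (n + k)) => SortsInto (n + k) k w),
    (X : Polynomial ℚ) ^ descents w

theorem List.foldr_max_mem {l : List ℕ} (hl : l ≠ []) : l.foldr max 0 ∈ l :=
  List.maximum_mem (List.foldr_max_of_ne_nil hl).symm

theorem stackSortFuel_eq_of_length_le {f g : ℕ} {l : List ℕ} (hf : l.length ≤ f)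
    (hg : l.length ≤ g) : stackSortFuel f l = stackSortFuel g l := by
  induction f generalizing g l with
  | zero => cases l <;> cases g <;> simp_all [stackSortFuel]
  | succ f ih =>
    match g, l with
    | 0, [] | _ + 1, [] => rfl
    | 0, _ :: _ => simp at hg
    | g + 1, a :: l =>
      have hidx := List.idxOf_lt_length_iff.2 (List.foldr_max_mem (List.cons_ne_nil a l))
      simp only [List.length_cons] at hf hg hidx
      simp only [stackSortFuel]
      rw [ih (g := g) (by simp only [List.length_take, List.length_cons]; omega)
          (by simp only [List.length_take, List.length_cons]; omega),
        ih (g := g) (by simp only [List.length_drop, List.length_cons]; omega)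
          (by simp only [List.length_drop, List.length_cons]; omega)]

theorem stackSortFuel_eq_stackSort {f : ℕ} {l : List ℕ} (hf : l.length ≤ f) :
    stackSortFuel f l = stackSort l :=
  stackSortFuel_eq_of_length_le hf le_rfl

theorem stackSort_append_cons {L R : List ℕ} {m : ℕ} (hL : ∀ x ∈ L, x < m)
    (hR : ∀ x ∈ R, x < m) : stackSort (L ++ m :: R) = stackSort L ++ stackSort R ++ [m] := by
  have hmax : (L ++ m :: R).foldr max 0 = m := by
    refine le_antisymm (List.max_le_of_forall_le _ _ fun x hx => ?_)
      (List.le_max_of_le (by simp) le_rfl)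
    rcases List.mem_append.1 hx with hx | hx
    · exact (hL x hx).le
    · rcases List.mem_cons.1 hx with rfl | hx
      · rfl
      · exact (hR x hx).le
  have hidx : (L ++ m :: R).idxOf m = L.length := by
    rw [List.idxOf_append_of_notMem fun h => (hL m h).false, List.idxOf_cons_self, add_zero]
  have hdrop : (L ++ m :: R).drop (L.length + 1) = R := by simp [List.drop_append]
  obtain ⟨a, l, hal⟩ : ∃ a l, L ++ m :: R = a :: l := List.exists_cons_of_ne_nil (by simp)
  have hlen := congrArg List.length hal
  simp only [List.length_append, List.length_cons] at hlen
  show stackSortFuel (L ++ m :: R).length (L ++ m :: R) = _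
  rw [hal, List.length_cons, stackSortFuel, ← hal, hmax, hidx, List.take_left, hdrop,
    stackSortFuel_eq_stackSort (by omega), stackSortFuel_eq_stackSort (by omega)]

theorem length_stackSortFuel {f : ℕ} {l : List ℕ} (hf : l.length ≤ f) :
    (stackSortFuel f l).length = l.length := by
  induction f generalizing l with
  | zero => cases l <;> simp_all [stackSortFuel]
  | succ f ih =>
    cases l with
    | nil => rfl
    | cons a l =>
      have hidx := List.idxOf_lt_length_iff.2 (List.foldr_max_mem (List.cons_ne_nil a l))
      simp only [List.length_cons] at hf hidx
      simp only [stackSortFuel, List.length_append, List.length_singleton]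
      rw [ih (by simp only [List.length_take, List.length_cons]; omega),
        ih (by simp only [List.length_drop, List.length_cons]; omega)]
      simp only [List.length_take, List.length_drop, List.length_cons]
      omega

@[simp]
theorem stackSort_nil : stackSort [] = [] := rfl

@[simp]
theorem length_stackSort (l : List ℕ) : (stackSort l).length = l.length :=
  length_stackSortFuel le_rfl

theorem stackSort_append_singleton {L : List ℕ} {m : ℕ} (hL : ∀ x ∈ L, x < m) :
    stackSort (L ++ [m]) = stackSort L ++ [m] := by
  simpa using stackSort_append_cons hL (R := []) (by simp)

theorem stackSort_cons {R : List ℕ} {m : ℕ} (hR : ∀ x ∈ R, x < m) :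
    stackSort (m :: R) = stackSort R ++ [m] := by
  simpa using stackSort_append_cons (L := []) (by simp) hR

def listDescents : List ℕ → ℕ
  | a :: b :: l => listDescents (b :: l) + if b < a then 1 else 0
  | _ => 0

theorem listDescents_append_pair (l : List ℕ) (a b : ℕ) :
    listDescents (l ++ [a, b]) = listDescents (l ++ [a]) + if b < a then 1 else 0 := by
  induction l with
  | nil => simp [listDescents]
  | cons c l ih =>
    cases l with
    | nil => simp [listDescents]; omega
    | cons d l => simp only [List.cons_append, listDescents] at ih ⊢; rw [ih]; omega

theorem listDescents_append_singleton_of_forall_lt {l : List ℕ} {b : ℕ}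
    (hl : ∀ x ∈ l, x < b) : listDescents (l ++ [b]) = listDescents l := by
  induction l using List.reverseRecOn with
  | nil => rfl
  | append_singleton l a _ =>
    rw [List.append_assoc, List.singleton_append, listDescents_append_pair,
      if_neg (hl a (by simp)).not_gt, add_zero]

theorem listDescents_cons_of_forall_lt {l : List ℕ} (hl : l ≠ []) {b : ℕ}
    (hb : ∀ x ∈ l, x < b) : listDescents (b :: l) = listDescents l + 1 := by
  obtain ⟨a, l, rfl⟩ := List.exists_cons_of_ne_nil hl
  rw [listDescents, if_pos (hb a (by simp))]

theorem listDescents_map_of_strictMono {g : ℕ → ℕ} (hg : StrictMono g) (l : List ℕ) :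
    listDescents (l.map g) = listDescents l := by
  induction l with
  | nil => rfl
  | cons a l ih =>
    cases l with
    | nil => rfl
    | cons b l => simp only [List.map_cons, listDescents, hg.lt_iff_lt] at ih ⊢; rw [ih]

theorem listDescents_cons_ofFn {n : ℕ} (a : ℕ) (g : Fin (n + 1) → ℕ) :
    listDescents (a :: List.ofFn g) = listDescents (List.ofFn g) + if g 0 < a then 1 else 0 := by
  rw [List.ofFn_succ, listDescents]

theorem card_descentSet_eq_listDescents_ofFn {n : ℕ} (f : Fin n → ℕ) :
    (Finset.univ.filter fun i : Fin n => ∃ j : Fin n, (j : ℕ) = i + 1 ∧ f j < f i).card =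
      listDescents (List.ofFn f) := by
  induction n with
  | zero => rfl
  | succ n ih =>
    cases n with
    | zero => simp [listDescents]
    | succ n =>
      rw [Fin.card_filter_univ_succ', List.ofFn_succ, listDescents_cons_ofFn, ← ih, add_comm]
      congr 2 <;> simp [Fin.exists_fin_succ]

section OneLine

variable {m : ℕ}

@[simp]
theorem length_oneLine (w : Equiv.Perm (Fin m)) : (oneLine w).length = m := by
  simp [oneLine]

theorem nodup_oneLine (w : Equiv.Perm (Fin m)) : (oneLine w).Nodup :=
  List.nodup_ofFn.2 fun i j h => w.injective (Fin.ext (by simpa using h))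

theorem lt_of_mem_oneLine {w : Equiv.Perm (Fin m)} {x : ℕ} (hx : x ∈ oneLine w) :
    x < m + 1 := by
  obtain ⟨i, rfl⟩ := List.mem_ofFn.1 hx
  simp

theorem descents_eq_listDescents_oneLine (w : Equiv.Perm (Fin m)) :
    descents w = listDescents (oneLine w) := by
  rw [oneLine, ← card_descentSet_eq_listDescents_ofFn]
  simp only [descents, Fin.lt_def]
  congr 2
  ext
  simp

theorem oneLine_eq_cons (w : Equiv.Perm (Fin (m + 1))) :
    oneLine w = ((w 0 : ℕ) + 1) :: List.ofFn fun i => (w i.succ : ℕ) + 1 :=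
  List.ofFn_succ

theorem oneLine_eq_append_singleton (w : Equiv.Perm (Fin (m + 1))) :
    oneLine w = (List.ofFn fun i => (w i.castSucc : ℕ) + 1) ++ [(w (Fin.last m) : ℕ) + 1] := by
  rw [oneLine, List.ofFn_succ', List.concat_eq_append]

theorem oneLine_mul_finRotate (w : Equiv.Perm (Fin (m + 1))) :
    oneLine (w * finRotate (m + 1)) = (oneLine w).rotate 1 := by
  rw [oneLine_eq_append_singleton, oneLine_eq_cons w, List.rotate_cons_succ, List.rotate_zero]
  simp [Fin.coeSucc_eq_succ]

theorem exists_oneLine_eq_append_cons (w : Equiv.Perm (Fin (m + 1))) :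
    ∃ L R, oneLine w = L ++ (m + 1) :: R ∧
      (∀ x ∈ L, x < m + 1) ∧ ∀ x ∈ R, x < m + 1 := by
  have hmem : m + 1 ∈ oneLine w := List.mem_ofFn.2 ⟨w.symm (Fin.last m), by simp⟩
  obtain ⟨L, R, hLR⟩ := List.mem_iff_append.1 hmem
  have hnodup := nodup_oneLine w
  rw [hLR, List.nodup_middle, List.nodup_cons, List.mem_append, not_or] at hnodup
  have hle (x : ℕ) (hx : x ∈ L ∨ x ∈ R) : x ≤ m + 1 :=
    Nat.le_of_lt_succ (lt_of_mem_oneLine (by rw [hLR]; simpa using hx.imp_right Or.inr))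
  exact ⟨L, R, hLR, fun x hx => (hle x (.inl hx)).lt_of_ne (ne_of_mem_of_not_mem hx hnodup.1.1),
    fun x hx => (hle x (.inr hx)).lt_of_ne (ne_of_mem_of_not_mem hx hnodup.1.2)⟩

theorem sortsInto_congr {k : ℕ} {v w : Equiv.Perm (Fin m)}
    (h : stackSort (oneLine w) = stackSort (oneLine v)) : SortsInto m k w ↔ SortsInto m k v := by
  rw [SortsInto, SortsInto, h]

theorem sortsInto_succ_iff {k : ℕ} {v : Equiv.Perm (Fin m)} {w : Equiv.Perm (Fin (m + 1))}
    (h : stackSort (oneLine w) = stackSort (oneLine v) ++ [m + 1]) :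
    SortsInto (m + 1) k w ↔ SortsInto m k v := by
  have hlen : (stackSort (oneLine v)).length = m := by simp
  unfold SortsInto
  rw [h]
  refine ⟨fun hw i hki hi => ?_, fun hv i hki hi => ?_⟩
  · rw [← List.getD_append _ _ _ _ (by omega)]
    exact hw i hki (by omega)
  · rcases Nat.lt_or_ge i m with hi | hi
    · rw [List.getD_append _ _ _ _ (by omega)]
      exact hv i hki hi
    · rw [List.getD_append_right _ _ _ _ (by omega)]
      simp [show i = m by omega, hlen]

end OneLine

section ExtendLast

variable {m : ℕ}

def extendLast (v : Equiv.Perm (Fin m)) : Equiv.Perm (Fin (m + 1)) :=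
  v.viaFintypeEmbedding Fin.castSuccEmb

@[simp]
theorem extendLast_castSucc (v : Equiv.Perm (Fin m)) (i : Fin m) :
    extendLast v i.castSucc = (v i).castSucc :=
  Equiv.Perm.viaFintypeEmbedding_apply_image v Fin.castSuccEmb i

@[simp]
theorem extendLast_last (v : Equiv.Perm (Fin m)) : extendLast v (Fin.last m) = Fin.last m :=
  Equiv.Perm.viaFintypeEmbedding_apply_notMem_range _ _ (by simp [Fin.range_castSucc])

theorem extendLast_injective : Function.Injective (extendLast (m := m)) := fun v v' h =>
  Equiv.ext fun i => Fin.castSucc_injective _ (by simpa using congrArg (· i.castSucc) h)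

theorem exists_extendLast_eq {w : Equiv.Perm (Fin (m + 1))} (hw : w (Fin.last m) = Fin.last m) :
    ∃ v, extendLast v = w := by
  have hne (i : Fin m) : w i.castSucc ≠ Fin.last m := fun h =>
    (Fin.castSucc_lt_last i).ne (w.injective (h.trans hw.symm))
  let f (i : Fin m) : Fin m := (w i.castSucc).castPred (hne i)
  have hf : Function.Injective f := fun i j h =>
    Fin.castSucc_injective _ (w.injective (Fin.castPred_inj.1 h))
  refine ⟨Equiv.ofBijective f hf.bijective_of_finite, Equiv.ext fun i => ?_⟩
  induction i using Fin.lastCases with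
  | last => simp [hw]
  | cast i => simp [f]

theorem oneLine_extendLast (v : Equiv.Perm (Fin m)) :
    oneLine (extendLast v) = oneLine v ++ [m + 1] := by
  rw [oneLine_eq_append_singleton]
  simp [oneLine]

theorem stackSort_oneLine_extendLast (v : Equiv.Perm (Fin m)) :
    stackSort (oneLine (extendLast v)) = stackSort (oneLine v) ++ [m + 1] := by
  rw [oneLine_extendLast, stackSort_append_singleton fun _ => lt_of_mem_oneLine]

theorem descents_extendLast (v : Equiv.Perm (Fin m)) : descents (extendLast v) = descents v := by
  rw [descents_eq_listDescents_oneLine, descents_eq_listDescents_oneLine, oneLine_extendLast,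
    listDescents_append_singleton_of_forall_lt fun _ => lt_of_mem_oneLine]

end ExtendLast

section BumpMax

variable {M : ℕ}

def raiseAbove (M x : ℕ) : ℕ := if x ≤ M then x else x + 1

theorem strictMono_raiseAbove (M : ℕ) : StrictMono (raiseAbove M) := fun a b h => by
  unfold raiseAbove
  split_ifs <;> omega

theorem map_raiseAbove_of_forall_lt {l : List ℕ} (hl : ∀ x ∈ l, x < M + 1) :
    l.map (raiseAbove M) = l :=
  (List.map_congr_left fun x hx => if_pos (Nat.le_of_lt_succ (hl x hx))).trans (List.map_id l)

/-- In one-line notation, `bumpMax v` is `v` with its maximum `M + 1` raised to `M + 2`,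
followed by `M + 1`. -/
def bumpMax (v : Equiv.Perm (Fin (M + 1))) : Equiv.Perm (Fin (M + 2)) :=
  Equiv.swap (Fin.last M).castSucc (Fin.last (M + 1)) * extendLast v

theorem bumpMax_castSucc (v : Equiv.Perm (Fin (M + 1))) (i : Fin (M + 1)) :
    bumpMax v i.castSucc = if v i = Fin.last M then Fin.last (M + 1) else (v i).castSucc := by
  rw [bumpMax, Equiv.Perm.mul_apply, extendLast_castSucc]
  split_ifs with h
  · rw [h, Equiv.swap_apply_left]
  · exact Equiv.swap_apply_of_ne_of_ne (fun h' => h (Fin.castSucc_injective _ h'))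
      (Fin.castSucc_lt_last _).ne

@[simp]
theorem bumpMax_last (v : Equiv.Perm (Fin (M + 1))) :
    bumpMax v (Fin.last (M + 1)) = (Fin.last M).castSucc := by
  rw [bumpMax, Equiv.Perm.mul_apply, extendLast_last, Equiv.swap_apply_right]

theorem val_bumpMax_zero (v : Equiv.Perm (Fin (M + 1))) :
    (bumpMax v 0 : ℕ) = if v 0 = Fin.last M then M + 1 else v 0 := by
  rw [← Fin.castSucc_zero, bumpMax_castSucc]
  split_ifs <;> simp

theorem oneLine_bumpMax (v : Equiv.Perm (Fin (M + 1))) :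
    oneLine (bumpMax v) = (oneLine v).map (raiseAbove M) ++ [M + 1] := by
  rw [oneLine_eq_append_singleton, bumpMax_last, oneLine, List.map_ofFn]
  congr 2
  funext i
  by_cases h : v i = Fin.last M
  · simp [bumpMax_castSucc, h, raiseAbove]
  · have := Fin.val_lt_last h
    simp [bumpMax_castSucc, h, raiseAbove, show (v i : ℕ) + 1 ≤ M by omega]

theorem stackSort_oneLine_bumpMax (v : Equiv.Perm (Fin (M + 1))) :
    stackSort (oneLine (bumpMax v)) = stackSort (oneLine v) ++ [M + 2] := by
  obtain ⟨L, R, hv, hL, hR⟩ := exists_oneLine_eq_append_cons v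
  have hRM : ∀ x ∈ R ++ [M + 1], x < M + 2 := by
    simp only [List.mem_append, List.mem_singleton]
    rintro x (hx | rfl)
    · exact (hR x hx).trans (by omega)
    · omega
  rw [oneLine_bumpMax, hv, List.map_append, List.map_cons, map_raiseAbove_of_forall_lt hL,
    map_raiseAbove_of_forall_lt hR, List.append_assoc, List.cons_append,
    show raiseAbove M (M + 1) = M + 2 by simp [raiseAbove],
    stackSort_append_cons (fun x hx => (hL x hx).trans (by omega)) hRM,
    stackSort_append_singleton hR, stackSort_append_cons hL hR]
  simp

theorem descents_bumpMax (v : Equiv.Perm (Fin (M + 1))) :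
    descents (bumpMax v) = descents v + if v (Fin.last M) = Fin.last M then 1 else 0 := by
  rw [descents_eq_listDescents_oneLine, descents_eq_listDescents_oneLine, oneLine_bumpMax,
    oneLine_eq_append_singleton, List.map_append, List.map_singleton, List.append_assoc,
    List.singleton_append, listDescents_append_pair, ← List.map_singleton, ← List.map_append,
    listDescents_map_of_strictMono (strictMono_raiseAbove M)]
  congr 1
  by_cases h : v (Fin.last M) = Fin.last M
  · simp [h, raiseAbove]
  · have := Fin.val_lt_last h
    simp [h, raiseAbove, show (v (Fin.last M) : ℕ) + 1 ≤ M by omega, this.le]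

theorem bumpMax_injective : Function.Injective (bumpMax (M := M)) := fun _ _ h =>
  extendLast_injective (mul_left_cancel h)

theorem exists_bumpMax_eq {w : Equiv.Perm (Fin (M + 2))}
    (hw : w (Fin.last (M + 1)) = (Fin.last M).castSucc) : ∃ v, bumpMax v = w := by
  obtain ⟨v, hv⟩ :=
    exists_extendLast_eq (w := Equiv.swap (Fin.last M).castSucc (Fin.last (M + 1)) * w)
      (by rw [Equiv.Perm.mul_apply, hw, Equiv.swap_apply_left])
  exact ⟨v, by rw [bumpMax, hv, ← mul_assoc, Equiv.swap_mul_self, one_mul]⟩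

end BumpMax

section MoveMax

variable {M : ℕ}

theorem exists_oneLine_eq_cons_of_apply_zero {v : Equiv.Perm (Fin (M + 1))}
    (hv : v 0 = Fin.last M) :
    ∃ t, oneLine v = (M + 1) :: t ∧ t.length = M ∧ ∀ x ∈ t, x < M + 1 := by
  have h := oneLine_eq_cons v
  rw [hv, Fin.val_last] at h
  refine ⟨_, h, by simp, fun x hx => ?_⟩
  have hnodup := nodup_oneLine v
  rw [h, List.nodup_cons] at hnodup
  exact (Nat.le_of_lt_succ (lt_of_mem_oneLine (h ▸ List.mem_cons_of_mem _ hx))).lt_of_ne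
    (ne_of_mem_of_not_mem hx hnodup.1)

theorem stackSort_oneLine_mul_finRotate {v : Equiv.Perm (Fin (M + 1))} (hv : v 0 = Fin.last M) :
    stackSort (oneLine (v * finRotate (M + 1))) = stackSort (oneLine v) := by
  obtain ⟨t, ht, -, hlt⟩ := exists_oneLine_eq_cons_of_apply_zero hv
  rw [oneLine_mul_finRotate, ht, List.rotate_cons_succ, List.rotate_zero,
    stackSort_append_singleton hlt, stackSort_cons hlt]

theorem descents_mul_finRotate_add_one (hM : M ≠ 0) {v : Equiv.Perm (Fin (M + 1))}
    (hv : v 0 = Fin.last M) : descents (v * finRotate (M + 1)) + 1 = descents v := by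
  obtain ⟨t, ht, hlen, hlt⟩ := exists_oneLine_eq_cons_of_apply_zero hv
  rw [descents_eq_listDescents_oneLine, descents_eq_listDescents_oneLine, oneLine_mul_finRotate,
    ht, List.rotate_cons_succ, List.rotate_zero, listDescents_append_singleton_of_forall_lt hlt,
    listDescents_cons_of_forall_lt (List.ne_nil_of_length_pos (by omega)) hlt]

def moveFrontMaxToBack (v : Equiv.Perm (Fin (M + 1))) : Equiv.Perm (Fin (M + 1)) :=
  if v 0 = Fin.last M then v * finRotate (M + 1) else v

def moveBackMaxToFront (u : Equiv.Perm (Fin (M + 1))) : Equiv.Perm (Fin (M + 1)) :=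
  if u (Fin.last M) = Fin.last M then u * (finRotate (M + 1))⁻¹ else u

theorem stackSort_oneLine_moveFrontMaxToBack (v : Equiv.Perm (Fin (M + 1))) :
    stackSort (oneLine (moveFrontMaxToBack v)) = stackSort (oneLine v) := by
  unfold moveFrontMaxToBack
  split_ifs with hv
  · exact stackSort_oneLine_mul_finRotate hv
  · rfl

theorem stackSort_oneLine_moveBackMaxToFront (u : Equiv.Perm (Fin (M + 1))) :
    stackSort (oneLine (moveBackMaxToFront u)) = stackSort (oneLine u) := by
  unfold moveBackMaxToFront
  split_ifs with hu
  · have h0 : (u * (finRotate (M + 1))⁻¹) 0 = Fin.last M := by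
      rw [Equiv.Perm.mul_apply, Equiv.Perm.inv_eq_iff_eq.2 finRotate_last.symm, hu]
    rw [← stackSort_oneLine_mul_finRotate h0, inv_mul_cancel_right]
  · rfl

theorem moveFrontMaxToBack_apply_zero_ne {v : Equiv.Perm (Fin (M + 1))}
    (hv : v (Fin.last M) ≠ Fin.last M) : moveFrontMaxToBack v 0 ≠ Fin.last M := by
  unfold moveFrontMaxToBack
  split_ifs with h0
  · intro h
    have h0last : (0 : Fin (M + 1)) = Fin.last M := (finRotate (M + 1)).injective
      ((v.injective (h.trans h0.symm)).trans finRotate_last.symm)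
    exact hv (h0last ▸ h0)
  · exact h0

theorem moveBackMaxToFront_apply_last_ne {u : Equiv.Perm (Fin (M + 1))}
    (hu : u 0 ≠ Fin.last M) : moveBackMaxToFront u (Fin.last M) ≠ Fin.last M := by
  unfold moveBackMaxToFront
  split_ifs with hl
  · intro h
    have hlast0 : Fin.last M = 0 :=
      (Equiv.Perm.inv_eq_iff_eq.1 (u.injective (h.trans hl.symm))).trans finRotate_last
    exact hu (hlast0 ▸ hl)
  · exact hl

theorem moveBackMaxToFront_moveFrontMaxToBack {v : Equiv.Perm (Fin (M + 1))}
    (hv : v (Fin.last M) ≠ Fin.last M) : moveBackMaxToFront (moveFrontMaxToBack v) = v := by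
  unfold moveFrontMaxToBack
  split_ifs with h0
  · rw [moveBackMaxToFront, if_pos (by rw [Equiv.Perm.mul_apply, finRotate_last, h0]),
      mul_inv_cancel_right]
  · rw [moveBackMaxToFront, if_neg hv]

theorem moveFrontMaxToBack_moveBackMaxToFront {u : Equiv.Perm (Fin (M + 1))}
    (hu : u 0 ≠ Fin.last M) : moveFrontMaxToBack (moveBackMaxToFront u) = u := by
  unfold moveBackMaxToFront
  split_ifs with hl
  · rw [moveFrontMaxToBack, if_pos (by
      rw [Equiv.Perm.mul_apply, Equiv.Perm.inv_eq_iff_eq.2 finRotate_last.symm, hl]),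
      inv_mul_cancel_right]
  · rw [moveFrontMaxToBack, if_neg hu]

theorem descents_bumpMax_moveFrontMaxToBack {v : Equiv.Perm (Fin (M + 1))}
    (hv : v (Fin.last M) ≠ Fin.last M) :
    descents (bumpMax (moveFrontMaxToBack v)) = descents v := by
  by_cases h0 : v 0 = Fin.last M
  · have hM : M ≠ 0 := by
      rintro rfl
      exact hv h0 -- in `Fin 1`, `Fin.last 0 = 0`
    have hl : (v * finRotate (M + 1)) (Fin.last M) = Fin.last M := by
      rw [Equiv.Perm.mul_apply, finRotate_last, h0]
    rw [moveFrontMaxToBack, if_pos h0, descents_bumpMax, if_pos hl]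
    exact descents_mul_finRotate_add_one hM h0
  · rw [moveFrontMaxToBack, if_neg h0, descents_bumpMax, if_neg hv, add_zero]

end MoveMax

def sortsIntoDescentPoly (N k : ℕ) : ℚ[X] :=
  ∑ w ∈ Finset.univ.filter (fun w : Equiv.Perm (Fin N) => SortsInto N k w), X ^ descents w

section Sums

variable {M : ℕ} (k : ℕ)

theorem sum_bumpMax :
    ∑ w ∈ Finset.univ.filter (fun w : Equiv.Perm (Fin (M + 2)) => SortsInto (M + 2) k w ∧
        (w 0 : ℕ) < M ∧ w (Fin.last (M + 1)) = (Fin.last M).castSucc), X ^ descents w =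
      ∑ u ∈ Finset.univ.filter (fun u : Equiv.Perm (Fin (M + 1)) =>
        SortsInto (M + 1) k u ∧ u 0 ≠ Fin.last M), (X : ℚ[X]) ^ descents (bumpMax u) := by
  have hsorts (u : Equiv.Perm (Fin (M + 1))) :=
    sortsInto_succ_iff (k := k) (stackSort_oneLine_bumpMax u)
  have hzero (u : Equiv.Perm (Fin (M + 1))) : (bumpMax u 0 : ℕ) < M ↔ u 0 ≠ Fin.last M := by
    rw [val_bumpMax_zero]
    split_ifs with h
    · simp [h]
    · simp [h, Fin.val_lt_last h]
  symm
  refine Finset.sum_nbij bumpMax (fun u hu => ?_) bumpMax_injective.injOn (fun w hw => ?_)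
    (fun _ _ => rfl)
  · simp_all
  · simp only [Finset.coe_filter, Finset.mem_univ, true_and, Set.mem_ofPred_eq] at hw
    obtain ⟨u, rfl⟩ := exists_bumpMax_eq hw.2.2
    exact ⟨u, by simp_all, rfl⟩

theorem sum_moveFrontMaxToBack :
    ∑ u ∈ Finset.univ.filter (fun u : Equiv.Perm (Fin (M + 1)) =>
        SortsInto (M + 1) k u ∧ u 0 ≠ Fin.last M), (X : ℚ[X]) ^ descents (bumpMax u) =
      ∑ v ∈ Finset.univ.filter (fun v : Equiv.Perm (Fin (M + 1)) =>
        SortsInto (M + 1) k v ∧ v (Fin.last M) ≠ Fin.last M), X ^ descents v := by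
  symm
  refine Finset.sum_nbij' moveFrontMaxToBack moveBackMaxToFront ?_ ?_ ?_ ?_ ?_ <;>
    simp only [Finset.mem_filter, Finset.mem_univ, true_and, and_imp]
  · exact fun v hs hl => ⟨(sortsInto_congr (stackSort_oneLine_moveFrontMaxToBack v)).2 hs,
      moveFrontMaxToBack_apply_zero_ne hl⟩
  · exact fun u hs h0 => ⟨(sortsInto_congr (stackSort_oneLine_moveBackMaxToFront u)).2 hs,
      moveBackMaxToFront_apply_last_ne h0⟩
  · exact fun v _ hl => moveBackMaxToFront_moveFrontMaxToBack hl
  · exact fun u _ h0 => moveFrontMaxToBack_moveBackMaxToFront h0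
  · exact fun v _ hl => by rw [descents_bumpMax_moveFrontMaxToBack hl]

theorem sortsIntoDescentPoly_eq_sum_apply_last_eq :
    sortsIntoDescentPoly M k = ∑ v ∈ Finset.univ.filter (fun v : Equiv.Perm (Fin (M + 1)) =>
      SortsInto (M + 1) k v ∧ v (Fin.last M) = Fin.last M), X ^ descents v := by
  have hsorts (v : Equiv.Perm (Fin M)) :=
    sortsInto_succ_iff (k := k) (stackSort_oneLine_extendLast v)
  refine Finset.sum_nbij extendLast (fun v hv => ?_) extendLast_injective.injOn (fun w hw => ?_)
    (fun v _ => by rw [descents_extendLast])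
  · simp_all
  · simp only [Finset.coe_filter, Finset.mem_univ, true_and, Set.mem_ofPred_eq] at hw
    obtain ⟨v, rfl⟩ := exists_extendLast_eq hw.2
    exact ⟨v, by simpa [hsorts] using hw.1, rfl⟩

theorem sum_apply_last_ne_eq_sub :
    ∑ v ∈ Finset.univ.filter (fun v : Equiv.Perm (Fin (M + 1)) =>
        SortsInto (M + 1) k v ∧ v (Fin.last M) ≠ Fin.last M), X ^ descents v =
      sortsIntoDescentPoly (M + 1) k - sortsIntoDescentPoly M k := by
  rw [sortsIntoDescentPoly_eq_sum_apply_last_eq (M := M), sortsIntoDescentPoly, eq_sub_iff_add_eq',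
    ← Finset.sum_filter_add_sum_filter_not (Finset.univ.filter fun v => SortsInto (M + 1) k v)
      fun v => v (Fin.last M) = Fin.last M,
    Finset.filter_filter, Finset.filter_filter]

end Sums

theorem sum_sortsInto_apply_zero_le_apply_last_eq_sub (m k : ℕ) (hm : 1 ≤ m) :
    ∑ w ∈ Finset.univ.filter (fun w : Equiv.Perm (Fin (m + 1)) =>
        SortsInto (m + 1) k w ∧ (w ⟨0, by omega⟩ : ℕ) + 1 ≤ m - 1 ∧
          (w ⟨m, by omega⟩ : ℕ) + 1 = m),
      (X : ℚ[X]) ^ descents w =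
    sortsIntoDescentPoly m k - sortsIntoDescentPoly (m - 1) k := by
  obtain ⟨M, rfl⟩ : ∃ M, m = M + 1 := ⟨m - 1, by omega⟩
  calc _ = ∑ w ∈ Finset.univ.filter (fun w : Equiv.Perm (Fin (M + 2)) =>
          SortsInto (M + 2) k w ∧ (w 0 : ℕ) < M ∧
            w (Fin.last (M + 1)) = (Fin.last M).castSucc), X ^ descents w := by
        refine Finset.sum_congr (Finset.filter_congr fun w _ => ?_) fun _ _ => rfl
        rw [show (⟨M + 1, by omega⟩ : Fin (M + 1 + 1)) = Fin.last (M + 1) from rfl]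
        simp [Fin.ext_iff]
    _ = _ := sum_bumpMax k
    _ = _ := sum_moveFrontMaxToBack k
    _ = _ := sum_apply_last_ne_eq_sub k

/-- The descent generating function of
`{w ∈ 𝔖_{n+k+1} : s(w) ∈ 𝔖_{n+1,k}, w(1) ≤ n+k-1, w(n+k+1) = n+k}`
equals `N_{n,k}(x) - N_{n-1,k}(x)`. -/
theorem H2_identity (n k : ℕ) (hn : 1 ≤ n) :
    ∑ w ∈ Finset.univ.filter (fun w : Equiv.Perm (Fin (n + k + 1)) =>
        SortsInto (n + k + 1) k w ∧ (w ⟨0, by omega⟩ : ℕ) + 1 ≤ n + k - 1 ∧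
          (w ⟨n + k, by omega⟩ : ℕ) + 1 = n + k),
      (X : Polynomial ℚ) ^ descents w =
    Nnk n k - Nnk (n - 1) k := by
  rw [sum_sortsInto_apply_zero_le_apply_last_eq_sub (n + k) k (by omega),
    show n + k - 1 = n - 1 + k by omega]
  rfl
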